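/- Bottleneck uncrossing for unions of two chains: let A₁ ⊆ A₂ ⊆ V and B₂ ⊆ B₁ ⊆ V with A₂ ∩ B₁ = ∅, and set S₁ = A₁ ∪ B₁ and S₂ = A₂ ∪ B₂. Then it is impossible that both δ(S₁) < δ(B₁ \ B₂) and δ(S₂) < δ(A₂ \ A₁) hold. -/
import Mathlib


open Finset

/-- The cut value of a set `X` in a weighted undirected graph on vertex set `V`
with edge-weight function `w`: the total weight of edges with exactly one
endpoint in `X`. -/
def cutVal {V : Type*} [Fintype V] [DecidableEq V] (w : V → V → ℝ) (X : Finset V) : ℝ :=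
  ∑ u ∈ X, ∑ v ∈ Xᶜ, w u v

section Aux

variable {V : Type*} [Fintype V] [DecidableEq V]

/-- Total weight between two sets. -/
def cutE (w : V → V → ℝ) (S T : Finset V) : ℝ := ∑ u ∈ S, ∑ v ∈ T, w u v

lemma cutVal_eq_cutE (w : V → V → ℝ) (X : Finset V) : cutVal w X = cutE w X Xᶜ := rfl

lemma cutE_union_left (w : V → V → ℝ) {S T : Finset V} (h : Disjoint S T) (U : Finset V) :
    cutE w (S ∪ T) U = cutE w S U + cutE w T U := Finset.sum_union h

lemma cutE_union_right (w : V → V → ℝ) (U : Finset V) {S T : Finset V} (h : Disjoint S T) :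
    cutE w U (S ∪ T) = cutE w U S + cutE w U T := by
  unfold cutE
  rw [← Finset.sum_add_distrib]
  exact Finset.sum_congr rfl fun u _ => Finset.sum_union h

lemma cutE_symm (w : V → V → ℝ) (hsymm : ∀ u v, w u v = w v u) (S T : Finset V) :
    cutE w S T = cutE w T S := by
  unfold cutE
  rw [Finset.sum_comm]
  exact Finset.sum_congr rfl fun u _ => Finset.sum_congr rfl fun v _ => hsymm v u

lemma cutE_nonneg (w : V → V → ℝ) (hnonneg : ∀ u v, 0 ≤ w u v) (S T : Finset V) :
    0 ≤ cutE w S T :=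
  Finset.sum_nonneg fun u _ => Finset.sum_nonneg fun v _ => hnonneg u v

lemma posimodular (w : V → V → ℝ) (hsymm : ∀ u v, w u v = w v u)
    (hnonneg : ∀ u v, 0 ≤ w u v) (X Y : Finset V) :
    cutVal w (X \ Y) + cutVal w (Y \ X) ≤ cutVal w X + cutVal w Y := by
  set P1 := X ∩ Y
  set P2 := X \ Y
  set P3 := Y \ X
  set P4 := (X ∪ Y)ᶜ
  have d12 : Disjoint P1 P2 := by
    simp only [Finset.disjoint_left, P1, P2, Finset.mem_inter, Finset.mem_sdiff]; tauto
  have d13 : Disjoint P1 P3 := by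
    simp only [Finset.disjoint_left, P1, P3, Finset.mem_inter, Finset.mem_sdiff]; tauto
  have d34 : Disjoint P3 P4 := by
    simp only [Finset.disjoint_left, P3, P4, Finset.mem_compl, Finset.mem_union,
      Finset.mem_sdiff]; tauto
  have d24 : Disjoint P2 P4 := by
    simp only [Finset.disjoint_left, P2, P4, Finset.mem_compl, Finset.mem_union,
      Finset.mem_sdiff]; tauto
  have d1_34 : Disjoint P1 (P3 ∪ P4) := by
    simp only [Finset.disjoint_left, P1, P3, P4, Finset.mem_union, Finset.mem_compl,
      Finset.mem_inter, Finset.mem_sdiff]; tauto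
  have hX : X = P1 ∪ P2 := by
    ext v; simp only [P1, P2, Finset.mem_union, Finset.mem_inter, Finset.mem_sdiff]; tauto
  have hXc : Xᶜ = P3 ∪ P4 := by
    ext v; simp only [P3, P4, Finset.mem_union, Finset.mem_compl, Finset.mem_sdiff]; tauto
  have hY : Y = P1 ∪ P3 := by
    ext v; simp only [P1, P3, Finset.mem_union, Finset.mem_inter, Finset.mem_sdiff]; tauto
  have hYc : Yᶜ = P2 ∪ P4 := by
    ext v; simp only [P2, P4, Finset.mem_union, Finset.mem_compl, Finset.mem_sdiff]; tauto
  have hP2c : P2ᶜ = P1 ∪ (P3 ∪ P4) := by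
    ext v; simp only [P1, P2, P3, P4, Finset.mem_union, Finset.mem_compl, Finset.mem_inter,
      Finset.mem_sdiff]; tauto
  have hP3c : P3ᶜ = P1 ∪ (P2 ∪ P4) := by
    ext v; simp only [P1, P2, P3, P4, Finset.mem_union, Finset.mem_compl, Finset.mem_inter,
      Finset.mem_sdiff]; tauto
  have d1_24 : Disjoint P1 (P2 ∪ P4) := by
    simp only [Finset.disjoint_left, P1, P2, P4, Finset.mem_union, Finset.mem_compl,
      Finset.mem_inter, Finset.mem_sdiff]; tauto
  have eX : cutVal w X = cutE w P1 P3 + cutE w P1 P4 + (cutE w P2 P3 + cutE w P2 P4) := by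
    rw [cutVal_eq_cutE]
    conv_lhs => rw [hXc]; rw [hX]
    rw [cutE_union_left w d12, cutE_union_right w _ d34, cutE_union_right w _ d34]
  have eY : cutVal w Y = cutE w P1 P2 + cutE w P1 P4 + (cutE w P3 P2 + cutE w P3 P4) := by
    rw [cutVal_eq_cutE]
    conv_lhs => rw [hYc]; rw [hY]
    rw [cutE_union_left w d13, cutE_union_right w _ d24, cutE_union_right w _ d24]
  have e2 : cutVal w P2 = cutE w P2 P1 + (cutE w P2 P3 + cutE w P2 P4) := by
    rw [cutVal_eq_cutE, hP2c, cutE_union_right w _ d1_34, cutE_union_right w _ d34]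
  have e3 : cutVal w P3 = cutE w P3 P1 + (cutE w P3 P2 + cutE w P3 P4) := by
    rw [cutVal_eq_cutE, hP3c, cutE_union_right w _ d1_24, cutE_union_right w _ d24]
  have s12 : cutE w P1 P2 = cutE w P2 P1 := cutE_symm w hsymm P1 P2
  have s13 : cutE w P1 P3 = cutE w P3 P1 := cutE_symm w hsymm P1 P3
  have n14 : 0 ≤ cutE w P1 P4 := cutE_nonneg w hnonneg P1 P4
  linarith

end Aux

theorem bottleneck_uncross {V : Type*} [Fintype V] [DecidableEq V] (w : V → V → ℝ)
    (hsymm : ∀ u v, w u v = w v u) (hnonneg : ∀ u v, 0 ≤ w u v)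
    (hdiag : ∀ v, w v v = 0)
    (A₁ A₂ B₁ B₂ : Finset V) (hA : A₁ ⊆ A₂) (hB : B₂ ⊆ B₁) (hdisj : A₂ ∩ B₁ = ∅) :
    ¬ (cutVal w (A₁ ∪ B₁) < cutVal w (B₁ \ B₂) ∧
       cutVal w (A₂ ∪ B₂) < cutVal w (A₂ \ A₁)) := by
  rintro ⟨h1, h2⟩
  have hd : ∀ x, x ∈ A₂ → x ∈ B₁ → False := by
    intro x hx hx'
    have : x ∈ A₂ ∩ B₁ := Finset.mem_inter.mpr ⟨hx, hx'⟩
    simp [hdisj] at this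
  have hS1 : (A₁ ∪ B₁) \ (A₂ ∪ B₂) = B₁ \ B₂ := by
    ext x
    simp only [Finset.mem_sdiff, Finset.mem_union, not_or]
    constructor
    · rintro ⟨hx | hx, hnA, hnB⟩
      · exact absurd (hA hx) hnA
      · exact ⟨hx, hnB⟩
    · rintro ⟨hx, hnB⟩
      exact ⟨Or.inr hx, fun hx2 => hd x hx2 hx, hnB⟩
  have hS2 : (A₂ ∪ B₂) \ (A₁ ∪ B₁) = A₂ \ A₁ := by
    ext x
    simp only [Finset.mem_sdiff, Finset.mem_union, not_or]
    constructor
    · rintro ⟨hx | hx, hnA, hnB⟩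
      · exact ⟨hx, hnA⟩
      · exact absurd (hB hx) hnB
    · rintro ⟨hx, hnA⟩
      exact ⟨Or.inl hx, hnA, fun hx2 => hd x hx hx2⟩
  have := posimodular w hsymm hnonneg (A₁ ∪ B₁) (A₂ ∪ B₂)
  rw [hS1, hS2] at this
  linarith
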